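/- Let n ≥ 3 be odd. The set of integer pairs (e, h) with h ≥ 1 satisfying |-(n-1) - e/2| ≤ h (the signature bound region W₄) but lying in neither W₁ = {(e,h) : |-n - e/2| + 1 ≤ h} nor W₃ = {(e,h) : |1 - e/2| + n ≤ h}, and satisfying e ≡ 2h (mod 4), is exactly the set {(2h - 2(n-1), h) : 1 ≤ h ≤ n-1}, i.e., exactly n-1 points all lying on the line h = e/2 + (n-1). -/

import Mathlib

/-!
Put `a = e/2 + n - 1`. Membership in `W₄` and not in `W₁` says `|a| ≤ h ≤ |a + 1|`, and Massey's
congruence together with `n` odd makes `a ≡ h (mod 2)`; this forces `a ≥ 0` and then `h = a`, i.e. the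
point lies on the line `e = 2h - 2(n - 1)`. On that line, avoiding `W₃` amounts to `h < n`.
-/

section HalfIntegers

variable {K : Type*} [Field K] [LinearOrder K] [IsStrictOrderedRing K]

theorem Int.abs_cast_sub_half (a e : ℤ) : |(a : K) - e / 2| = ((|2 * a - e| : ℤ) : K) / 2 := by
  rw [Int.cast_abs, ← abs_two, ← abs_div, abs_two]
  push_cast
  ring_nf

theorem Int.abs_cast_sub_half_add_le_iff (a e c h : ℤ) :
    |(a : K) - e / 2| + c ≤ h ↔ |2 * a - e| + 2 * c ≤ 2 * h := by
  rw [Int.abs_cast_sub_half, ← Int.cast_le (R := K)]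
  push_cast
  constructor <;> intro <;> linarith

theorem Int.abs_cast_sub_half_le_iff (a e h : ℤ) :
    |(a : K) - e / 2| ≤ h ↔ |2 * a - e| ≤ 2 * h := by
  simpa using Int.abs_cast_sub_half_add_le_iff (K := K) a e 0 h

end HalfIntegers

theorem unknown_region_iff_of_odd {n e h : ℤ} (hn : Odd n) :
    (1 ≤ h ∧ |2 * (1 - n) - e| ≤ 2 * h ∧ ¬ |2 * -n - e| + 2 * 1 ≤ 2 * h ∧
      ¬ |2 * 1 - e| + 2 * n ≤ 2 * h ∧ (e - 2 * h) % 4 = 0) ↔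
      (1 ≤ h ∧ h ≤ n - 1 ∧ e = 2 * h - 2 * (n - 1)) := by
  obtain ⟨k, rfl⟩ := hn
  rcases abs_cases (2 * (1 - (2 * k + 1)) - e) with ⟨h₁, _⟩ | ⟨h₁, _⟩ <;>
  rcases abs_cases (2 * -(2 * k + 1) - e) with ⟨h₂, _⟩ | ⟨h₂, _⟩ <;>
  rcases abs_cases (2 * 1 - e) with ⟨h₃, _⟩ | ⟨h₃, _⟩ <;>
  omega

theorem stmt8_general (n : ℤ) (hodd : Odd n) :
    {p : ℤ × ℤ | 1 ≤ p.2 ∧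
        |(-((n : ℚ) - 1)) - (p.1 : ℚ) / 2| ≤ (p.2 : ℚ) ∧
        ¬ (|(-(n : ℚ)) - (p.1 : ℚ) / 2| + 1 ≤ (p.2 : ℚ)) ∧
        ¬ (|(1 : ℚ) - (p.1 : ℚ) / 2| + (n : ℚ) ≤ (p.2 : ℚ)) ∧
        (p.1 - 2 * p.2) % 4 = 0} =
      {p : ℤ × ℤ | ∃ h : ℤ, 1 ≤ h ∧ h ≤ n - 1 ∧ p = (2 * h - 2 * (n - 1), h)} := by
  ext ⟨e, h⟩
  rw [show -((n : ℚ) - 1) = ((1 - n : ℤ) : ℚ) by push_cast; ring,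
    show -(n : ℚ) = ((-n : ℤ) : ℚ) by push_cast; ring, ← Int.cast_one (R := ℚ)]
  simp only [Set.mem_ofPred_eq, Prod.mk.injEq, Int.abs_cast_sub_half_le_iff,
    Int.abs_cast_sub_half_add_le_iff, unknown_region_iff_of_odd hodd, existsAndEq, and_true]

/-- For T(2,n), n ≥ 3 odd: the unknown region U = (W₁ ∪ W₃)ᶜ ∩ W₄ (with
Massey's congruence) is exactly the n-1 points (2h - 2(n-1), h), 1 ≤ h ≤ n-1,
on the line h = e/2 + (n-1). -/
theorem stmt8 (n : ℤ) (hn : 3 ≤ n) (hodd : Odd n) :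
    {p : ℤ × ℤ | 1 ≤ p.2 ∧
        |(-((n : ℚ) - 1)) - (p.1 : ℚ) / 2| ≤ (p.2 : ℚ) ∧
        ¬ (|(-(n : ℚ)) - (p.1 : ℚ) / 2| + 1 ≤ (p.2 : ℚ)) ∧
        ¬ (|(1 : ℚ) - (p.1 : ℚ) / 2| + (n : ℚ) ≤ (p.2 : ℚ)) ∧
        (p.1 - 2 * p.2) % 4 = 0} =
      {p : ℤ × ℤ | ∃ h : ℤ, 1 ≤ h ∧ h ≤ n - 1 ∧ p = (2 * h - 2 * (n - 1), h)} :=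
  stmt8_general n hodd
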